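/- Let m₁ > 0 and m₂ = 2 m₁. Let v, ṽ : ℝ × ℝ² → ℝ be smooth functions satisfying (□ + m₁²) v = 0 and (□ + m₂²) ṽ = 0 on ℝ × ℝ². Then for every index 0 ≤ a ≤ 2, the exact identity H_{1,a}(v, ṽ) = −(1/(4 m₁²)) (□ + m₁²)( v ∂_a ṽ ) − (1/(2 m₁²)) Σ_{b,c=0}^{2} η_{bc} Q_{ba}(v, ∂_c ṽ) holds pointwise on ℝ × ℝ², where H_{1,a}(v, ṽ) = v ∂_a ṽ + 2 ṽ ∂_a v. -/

import Mathlib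

/- Coordinates on ℝ × ℝ² are encoded as points `x : Fin 3 → ℝ` with
`t = x 0`, `x₁ = x 1`, `x₂ = x 2`. -/

/-- The partial derivative `∂ₐ`. -/
noncomputable def pd (a : Fin 3) (f : (Fin 3 → ℝ) → ℝ) : (Fin 3 → ℝ) → ℝ :=
  fun x => fderiv ℝ f x (Pi.single a 1)

/-- The d'Alembertian `□ = ∂₀² - ∂₁² - ∂₂²`. -/
noncomputable def dAlembert (f : (Fin 3 → ℝ) → ℝ) : (Fin 3 → ℝ) → ℝ :=
  fun x => pd 0 (pd 0 f) x - pd 1 (pd 1 f) x - pd 2 (pd 2 f) x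

/-- The strong null forms `Q_{ab}(φ, ψ) = (∂_a φ)(∂_b ψ) - (∂_b φ)(∂_a ψ)`. -/
noncomputable def Qab (a b : Fin 3) (f g : (Fin 3 → ℝ) → ℝ) : (Fin 3 → ℝ) → ℝ :=
  fun x => pd a f x * pd b g x - pd b f x * pd a g x

/-- The Minkowski metric coefficients `(η_{ab}) = diag(-1, 1, 1)`. -/
def eta (a b : Fin 3) : ℝ := if a = b then (if a = 0 then -1 else 1) else 0

private lemma pd_smooth {f : (Fin 3 → ℝ) → ℝ} (hf : ContDiff ℝ (⊤ : ℕ∞) f) (a : Fin 3) :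
    ContDiff ℝ (⊤ : ℕ∞) (pd a f) :=
  (hf.fderiv_right (by simp)).clm_apply contDiff_const

private lemma pd_mul {f g : (Fin 3 → ℝ) → ℝ} (hf : ContDiff ℝ (⊤ : ℕ∞) f) (hg : ContDiff ℝ (⊤ : ℕ∞) g)
    (a : Fin 3) (x : Fin 3 → ℝ) :
    pd a (fun y => f y * g y) x = pd a f x * g x + f x * pd a g x := by
  unfold pd
  rw [fderiv_fun_mul (hf.differentiable (by simp) x) (hg.differentiable (by simp) x)]
  simp; ring

private lemma pd_add {f g : (Fin 3 → ℝ) → ℝ} (hf : ContDiff ℝ (⊤ : ℕ∞) f) (hg : ContDiff ℝ (⊤ : ℕ∞) g)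
    (a : Fin 3) (x : Fin 3 → ℝ) :
    pd a (fun y => f y + g y) x = pd a f x + pd a g x := by
  unfold pd
  rw [fderiv_fun_add (hf.differentiable (by simp) x) (hg.differentiable (by simp) x)]
  simp

private lemma pd_sub {f g : (Fin 3 → ℝ) → ℝ} (hf : ContDiff ℝ (⊤ : ℕ∞) f) (hg : ContDiff ℝ (⊤ : ℕ∞) g)
    (a : Fin 3) (x : Fin 3 → ℝ) :
    pd a (fun y => f y - g y) x = pd a f x - pd a g x := by
  unfold pd
  rw [fderiv_fun_sub (hf.differentiable (by simp) x) (hg.differentiable (by simp) x)]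
  simp

private lemma pd_const_mul {f : (Fin 3 → ℝ) → ℝ} (hf : ContDiff ℝ (⊤ : ℕ∞) f) (c : ℝ)
    (a : Fin 3) (x : Fin 3 → ℝ) :
    pd a (fun y => c * f y) x = c * pd a f x := by
  unfold pd
  rw [fderiv_const_mul (hf.differentiable (by simp) x) c]
  simp

private lemma pd_comm {f : (Fin 3 → ℝ) → ℝ} (hf : ContDiff ℝ (⊤ : ℕ∞) f) (a b : Fin 3)
    (x : Fin 3 → ℝ) : pd a (pd b f) x = pd b (pd a f) x := by
  have hdf : Differentiable ℝ f := hf.differentiable (by simp)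
  have hdf' : DifferentiableAt ℝ (fderiv ℝ f) x :=
    ((hf.fderiv_right (m := 1) (by norm_cast)).differentiable (by simp)).differentiableAt
  have h : ∀ u w : Fin 3 → ℝ,
      fderiv ℝ (fun y => fderiv ℝ f y w) x u = fderiv ℝ (fderiv ℝ f) x u w := by
    intro u w
    rw [fderiv_clm_apply hdf' (differentiableAt_const _)]
    simp
  show fderiv ℝ (fun y => fderiv ℝ f y _) x _ = fderiv ℝ (fun y => fderiv ℝ f y _) x _
  rw [h, h]
  exact second_derivative_symmetric (fun y => (hdf y).hasFDerivAt) hdf'.hasFDerivAt _ _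

private lemma pd2_mul {f g : (Fin 3 → ℝ) → ℝ} (hf : ContDiff ℝ (⊤ : ℕ∞) f) (hg : ContDiff ℝ (⊤ : ℕ∞) g)
    (b : Fin 3) (x : Fin 3 → ℝ) :
    pd b (pd b (fun y => f y * g y)) x
      = pd b (pd b f) x * g x + 2 * (pd b f x * pd b g x) + f x * pd b (pd b g) x := by
  have h1 : pd b (fun y => f y * g y)
      = fun y => pd b f y * g y + f y * pd b g y := funext fun y => pd_mul hf hg b y
  rw [h1, pd_add ((pd_smooth hf b).mul hg) (hf.mul (pd_smooth hg b)),
    pd_mul (pd_smooth hf b) hg, pd_mul hf (pd_smooth hg b)]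
  ring

private lemma dAlembert_pd {g : (Fin 3 → ℝ) → ℝ} (hg : ContDiff ℝ (⊤ : ℕ∞) g) (a : Fin 3)
    (x : Fin 3 → ℝ) :
    dAlembert (pd a g) x = pd a (fun y => dAlembert g y) x := by
  have h : (fun y => dAlembert g y)
      = fun y => (pd 0 (pd 0 g) y - pd 1 (pd 1 g) y) - pd 2 (pd 2 g) y := rfl
  rw [h, pd_sub (((pd_smooth (pd_smooth hg 0) 0)).sub (pd_smooth (pd_smooth hg 1) 1))
      (pd_smooth (pd_smooth hg 2) 2),
    pd_sub (pd_smooth (pd_smooth hg 0) 0) (pd_smooth (pd_smooth hg 1) 1)]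
  have hb : ∀ b : Fin 3, pd b (pd b (pd a g)) x = pd a (pd b (pd b g)) x := by
    intro b
    have h2 : pd b (pd a g) = pd a (pd b g) := funext fun y => pd_comm hg b a y
    rw [h2, pd_comm (pd_smooth hg b) b a x]
  unfold dAlembert
  rw [hb 0, hb 1, hb 2]


/-- with resonant masses `m₂ = 2 m₁ > 0`, if `(□ + m₁²) v = 0`
and `(□ + m₂²) ṽ = 0`, then for every `0 ≤ a ≤ 2`,
`H_{1,a}(v, ṽ) = −(1/(4 m₁²)) (□ + m₁²)(v ∂_a ṽ)
  − (1/(2 m₁²)) Σ_{b,c} η_{bc} Q_{ba}(v, ∂_c ṽ)` pointwise, where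
`H_{1,a}(v, ṽ) = v ∂_a ṽ + 2 ṽ ∂_a v`. -/
theorem resonant_identity_H1 (m₁ m₂ : ℝ) (hm₁ : 0 < m₁) (hm₂ : m₂ = 2 * m₁)
    (v vt : (Fin 3 → ℝ) → ℝ) (hv : ContDiff ℝ (⊤ : ℕ∞) v) (hvt : ContDiff ℝ (⊤ : ℕ∞) vt)
    (hveq : ∀ x, dAlembert v x + m₁ ^ 2 * v x = 0)
    (hvteq : ∀ x, dAlembert vt x + m₂ ^ 2 * vt x = 0)
    (a : Fin 3) (x : Fin 3 → ℝ) :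
    v x * pd a vt x + 2 * vt x * pd a v x
      = -(1 / (4 * m₁ ^ 2)) *
          (dAlembert (fun y => v y * pd a vt y) x + m₁ ^ 2 * (v x * pd a vt x))
        - (1 / (2 * m₁ ^ 2)) *
          ∑ b : Fin 3, ∑ c : Fin 3, eta b c * Qab b a v (pd c vt) x := by
  have hm : (m₁ : ℝ) ^ 2 ≠ 0 := pow_ne_zero 2 hm₁.ne'
  have hvta : ContDiff ℝ (⊤ : ℕ∞) (pd a vt) := pd_smooth hvt a
  have hDw : dAlembert (fun y => v y * pd a vt y) x =
      dAlembert v x * pd a vt x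
      + 2 * (pd 0 v x * pd 0 (pd a vt) x - pd 1 v x * pd 1 (pd a vt) x
          - pd 2 v x * pd 2 (pd a vt) x)
      + v x * dAlembert (pd a vt) x := by
    unfold dAlembert
    rw [pd2_mul hv hvta 0 x, pd2_mul hv hvta 1 x, pd2_mul hv hvta 2 x]
    ring
  have hQ : ∑ b : Fin 3, ∑ c : Fin 3, eta b c * Qab b a v (pd c vt) x
      = -(pd 0 v x * pd 0 (pd a vt) x - pd 1 v x * pd 1 (pd a vt) x
          - pd 2 v x * pd 2 (pd a vt) x)
        + pd a v x * dAlembert vt x := by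
    have e0 := pd_comm hvt a 0 x
    have e1 := pd_comm hvt a 1 x
    have e2 := pd_comm hvt a 2 x
    simp only [Fin.sum_univ_three, eta, Qab]
    norm_num [Fin.ext_iff]
    rw [e0, e1, e2]
    unfold dAlembert
    ring
  have hvtDA : dAlembert vt x = -(m₂ ^ 2) * vt x := by linarith [hvteq x]
  have hvDA : dAlembert v x = -(m₁ ^ 2) * v x := by linarith [hveq x]
  have hDpd : dAlembert (pd a vt) x = -(m₂ ^ 2) * pd a vt x := by
    rw [dAlembert_pd hvt a x]
    have h : (fun y => dAlembert vt y) = fun y => -(m₂ ^ 2) * vt y := by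
      funext y; have := hvteq y; linarith
    rw [h, pd_const_mul hvt (-(m₂ ^ 2)) a x]
  rw [hDw, hQ, hvtDA, hvDA, hDpd, hm₂]
  field_simp
  ring
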